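/- arXiv:2301.12409 — 5 statements merged into one kernel-verified Lean document; each statement's English description precedes it below -/
import Mathlib

section
/- Let p(n) = a_t n^t + ... + a_0 be an integer polynomial with positive leading coefficient a_t > 0 and degree t ≥ 5. Then there exists M ∈ ℕ such that the double series ∑_{n=M}^∞ ∑_{k=1}^∞ 1/√(p(n+k) - p(n)) converges. -/
open Polynomial Finset


lemma pow_diff_le (x y : ℤ) (hy : 0 ≤ y) (hxy : y ≤ x) (i : ℕ) :
    x ^ i - y ^ i ≤ (x - y) * ((i : ℤ) * x ^ (i - 1)) := by
  have hx : 0 ≤ x := hy.trans hxy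
  rw [← geom_sum₂_mul x y i]
  rw [mul_comm (x - y)]
  apply mul_le_mul_of_nonneg_right _ (by linarith)
  calc ∑ j ∈ range i, x ^ j * y ^ (i - 1 - j)
      ≤ ∑ j ∈ range i, x ^ (i-1) := by
        apply Finset.sum_le_sum
        intro j hj
        have hj' : j < i := Finset.mem_range.mp hj
        calc x ^ j * y ^ (i - 1 - j) ≤ x ^ j * x ^ (i - 1 - j) := by
              apply mul_le_mul_of_nonneg_left (pow_le_pow_left₀ hy hxy _) (pow_nonneg hx _)
          _ = x ^ (i - 1) := by rw [← pow_add]; congr 1; omega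
    _ = (i : ℤ) * x ^ (i-1) := by rw [Finset.sum_const, Finset.card_range]; simp [nsmul_eq_mul]

lemma pow_diff_ge (x y : ℤ) (hy : 0 ≤ y) (hxy : y ≤ x) (t : ℕ) (ht : 1 ≤ t) :
    (x - y) * x ^ (t - 1) ≤ x ^ t - y ^ t := by
  have hx : 0 ≤ x := hy.trans hxy
  rw [← geom_sum₂_mul x y t, mul_comm (x - y)]
  apply mul_le_mul_of_nonneg_right _ (by linarith)
  have hmem : t - 1 ∈ Finset.range t := Finset.mem_range.mpr (by omega)
  have := Finset.single_le_sum (f := fun j => x ^ j * y ^ (t - 1 - j))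
    (fun j _ => mul_nonneg (pow_nonneg hx _) (pow_nonneg hy _)) hmem
  simpa using this

lemma key_ineq (p : Polynomial ℤ) (ht : 5 ≤ p.natDegree) (ha : 1 ≤ p.leadingCoeff)
    (x y : ℤ) (hy : 0 ≤ y) (hxy : y ≤ x) (hx1 : 1 ≤ x)
    (hx : 2 * ((p.natDegree : ℤ) * ∑ i ∈ Finset.range p.natDegree, |p.coeff i|) ≤ x) :
    (x - y) * x ^ 4 ≤ 2 * (p.eval x - p.eval y) := by
  set t := p.natDegree with htdef
  set S : ℤ := ∑ i ∈ Finset.range t, |p.coeff i| with hSdef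
  have hS0 : 0 ≤ S := Finset.sum_nonneg fun i _ => abs_nonneg _
  have hx0 : 0 ≤ x := by linarith
  have hxy0 : 0 ≤ x - y := by linarith
  have hsplit : p.eval x - p.eval y
      = p.leadingCoeff * (x ^ t - y ^ t) + ∑ i ∈ Finset.range t, p.coeff i * (x ^ i - y ^ i) := by
    rw [eval_eq_sum_range, eval_eq_sum_range (p := p), ← Finset.sum_sub_distrib,
      Finset.sum_range_succ]
    have : ∀ i, p.coeff i * x ^ i - p.coeff i * y ^ i = p.coeff i * (x ^ i - y ^ i) := by
      intro i; ring
    simp only [this, coeff_natDegree]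
    ring
  -- bound on tail sum
  have htail : -((x - y) * ((t : ℤ) * x ^ (t - 2)) * S)
      ≤ ∑ i ∈ Finset.range t, p.coeff i * (x ^ i - y ^ i) := by
    have habs : |∑ i ∈ Finset.range t, p.coeff i * (x ^ i - y ^ i)|
        ≤ (x - y) * ((t : ℤ) * x ^ (t - 2)) * S := by
      calc |∑ i ∈ Finset.range t, p.coeff i * (x ^ i - y ^ i)|
          ≤ ∑ i ∈ Finset.range t, |p.coeff i * (x ^ i - y ^ i)| :=
            Finset.abs_sum_le_sum_abs _ _
        _ ≤ ∑ i ∈ Finset.range t, (x - y) * ((t : ℤ) * x ^ (t - 2)) * |p.coeff i| := by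
            apply Finset.sum_le_sum
            intro i hi
            have hi' : i < t := Finset.mem_range.mp hi
            rw [abs_mul]
            have h1 : |x ^ i - y ^ i| = x ^ i - y ^ i :=
              abs_of_nonneg (by have := pow_le_pow_left₀ hy hxy i; linarith)
            rw [h1, mul_comm]
            apply mul_le_mul_of_nonneg_right _ (abs_nonneg _)
            calc x ^ i - y ^ i ≤ (x - y) * ((i : ℤ) * x ^ (i - 1)) := pow_diff_le x y hy hxy i
              _ ≤ (x - y) * ((t : ℤ) * x ^ (t - 2)) := by
                  apply mul_le_mul_of_nonneg_left _ hxy0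
                  apply mul_le_mul (by exact_mod_cast hi'.le)
                    (pow_le_pow_right₀ hx1 (by omega)) (pow_nonneg hx0 _) (by positivity)
        _ = (x - y) * ((t : ℤ) * x ^ (t - 2)) * S := by rw [← Finset.mul_sum]
    linarith [neg_abs_le (∑ i ∈ Finset.range t, p.coeff i * (x ^ i - y ^ i))]
  have hmain : (x - y) * x ^ (t - 1) ≤ x ^ t - y ^ t := pow_diff_ge x y hy hxy t (by omega)
  have hlead' : x ^ t - y ^ t ≤ p.leadingCoeff * (x ^ t - y ^ t) :=
    le_mul_of_one_le_left (by have := pow_le_pow_left₀ hy hxy t; linarith) ha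
  have hpow : x ^ (t - 2) * x = x ^ (t - 1) := by
    rw [← pow_succ]; congr 1; omega
  have hpow4 : x ^ 4 ≤ x ^ (t - 1) := pow_le_pow_right₀ hx1 (by omega)
  have h5 : 0 ≤ (x - y) * x ^ (t - 2) * (x - 2 * ((t : ℤ) * S)) :=
    mul_nonneg (mul_nonneg hxy0 (pow_nonneg hx0 _)) (by linarith)
  have h6 : (x - y) * x ^ 4 ≤ (x - y) * x ^ (t - 1) :=
    mul_le_mul_of_nonneg_left hpow4 hxy0
  nlinarith [mul_le_mul_of_nonneg_left hpow4 hxy0, hsplit, htail, hmain, hlead', h5, hpow]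

lemma perpoint (N K D : ℝ) (hN1 : 1 ≤ N) (hK1 : 1 ≤ K) (A : ℝ) (hA1 : 1 ≤ A) (hAN : A ≤ N)
    (hD : K * (N + K)^4 ≤ 2 * D) :
    1 / Real.sqrt D ≤ Real.sqrt 2 * (A ^ (-(5/4):ℝ) * K ^ (-(5/4):ℝ)) := by
  set X : ℝ := N + K with hX
  have hX0 : 0 < X := by positivity
  have hK0 : (0:ℝ) < K := by linarith
  have hA0 : (0:ℝ) < A := by linarith
  have hDpos : 0 < D := by nlinarith [pow_pos hX0 4]
  have hAB : A ^ ((5:ℝ)/4) * K ^ ((5:ℝ)/4) ≤ Real.sqrt K * X ^ 2 := by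
    apply le_of_pow_le_pow_left₀ (n := 4) (by norm_num) (by positivity)
    have e1 : (A ^ ((5:ℝ)/4)) ^ (4:ℕ) = A ^ (5:ℕ) := by
      rw [← Real.rpow_natCast (A ^ ((5:ℝ)/4)) 4, ← Real.rpow_mul hA0.le,
        ← Real.rpow_natCast A 5]
      norm_num
    have e2 : (K ^ ((5:ℝ)/4)) ^ (4:ℕ) = K ^ (5:ℕ) := by
      rw [← Real.rpow_natCast (K ^ ((5:ℝ)/4)) 4, ← Real.rpow_mul hK0.le,
        ← Real.rpow_natCast K 5]
      norm_num
    have e3 : (Real.sqrt K) ^ (4:ℕ) = K ^ (2:ℕ) := by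
      have h := Real.sq_sqrt hK0.le
      nlinarith [h]
    rw [mul_pow, e1, e2, mul_pow, e3]
    have hAX : A ^ (5:ℕ) ≤ X ^ (5:ℕ) := pow_le_pow_left₀ hA0.le (by linarith) 5
    have hKX : K ^ (3:ℕ) ≤ X ^ (3:ℕ) := pow_le_pow_left₀ hK0.le (by linarith) 3
    calc A ^ (5:ℕ) * K ^ (5:ℕ) = (A^(5:ℕ) * K^(3:ℕ)) * K^(2:ℕ) := by ring
      _ ≤ (X^(5:ℕ) * X^(3:ℕ)) * K^(2:ℕ) := by
          apply mul_le_mul_of_nonneg_right _ (by positivity)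
          exact mul_le_mul hAX hKX (by positivity) (by positivity)
      _ = K ^ (2:ℕ) * (X^2)^(4:ℕ) := by ring
  have hsqrt : Real.sqrt K * X ^ 2 ≤ Real.sqrt D * Real.sqrt 2 := by
    apply le_of_pow_le_pow_left₀ (n := 2) (by norm_num) (by positivity)
    have e1 : (Real.sqrt K * X ^ 2) ^ 2 = K * X ^ 4 := by
      rw [mul_pow, Real.sq_sqrt hK0.le]; ring
    have e2 : (Real.sqrt D * Real.sqrt 2) ^ 2 = 2 * D := by
      rw [mul_pow, Real.sq_sqrt hDpos.le, Real.sq_sqrt (by norm_num : (0:ℝ) ≤ 2)]; ring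
    rw [e1, e2]; exact hD
  have hpos : 0 < A ^ ((5:ℝ)/4) * K ^ ((5:ℝ)/4) := by positivity
  have step : 1 / Real.sqrt D ≤ Real.sqrt 2 / (A ^ ((5:ℝ)/4) * K ^ ((5:ℝ)/4)) := by
    rw [div_le_div_iff₀ (Real.sqrt_pos.mpr hDpos) hpos, one_mul]
    calc A ^ ((5:ℝ)/4) * K ^ ((5:ℝ)/4) ≤ Real.sqrt K * X ^ 2 := hAB
      _ ≤ Real.sqrt D * Real.sqrt 2 := hsqrt
      _ = Real.sqrt 2 * Real.sqrt D := by ring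
  calc 1 / Real.sqrt D ≤ Real.sqrt 2 / (A ^ ((5:ℝ)/4) * K ^ ((5:ℝ)/4)) := step
    _ = Real.sqrt 2 * (A ^ (-(5/4):ℝ) * K ^ (-(5/4):ℝ)) := by
        rw [Real.rpow_neg hA0.le, Real.rpow_neg hK0.le, div_eq_mul_inv, mul_inv]



lemma mainpoint (p : Polynomial ℤ) (hdeg : 5 ≤ p.natDegree) (ha : 1 ≤ p.leadingCoeff)
    (M : ℕ)
    (hM : (M : ℤ) = 2 * ((p.natDegree : ℤ) * ∑ i ∈ Finset.range p.natDegree, |p.coeff i|) + 1)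
    (n₁ k₁ : ℕ) :
    1 / Real.sqrt ((p.eval (((M + n₁ : ℕ) : ℤ) + ((k₁ : ℤ) + 1)) - p.eval ((M + n₁ : ℕ) : ℤ) : ℤ))
      ≤ Real.sqrt 2 * (((n₁:ℝ)+1) ^ (-(5/4):ℝ) * ((k₁:ℝ)+1) ^ (-(5/4):ℝ)) := by
  have hC0 : 0 ≤ (p.natDegree : ℤ) * ∑ i ∈ Finset.range p.natDegree, |p.coeff i| :=
    mul_nonneg (by positivity) (Finset.sum_nonneg fun i _ => abs_nonneg _)
  have hM1 : (1:ℤ) ≤ (M:ℤ) := by omega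
  set y : ℤ := ((M + n₁ : ℕ) : ℤ) with hydef
  set x : ℤ := y + ((k₁ : ℤ) + 1) with hxdef
  have hyM : (M : ℤ) ≤ y := by simp [hydef]
  have hy : 0 ≤ y := by linarith
  have hxy : y ≤ x := by simp [hxdef]; positivity
  have hk0 : (0:ℤ) ≤ (k₁:ℤ) := by positivity
  have hx1 : 1 ≤ x := by rw [hxdef]; linarith
  have hx2C : 2 * ((p.natDegree : ℤ) * ∑ i ∈ Finset.range p.natDegree, |p.coeff i|) ≤ x := by
    rw [hxdef]; omega
  have hkey := key_ineq p hdeg ha x y hy hxy hx1 hx2C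
  have hxy4 : x - y = (k₁ : ℤ) + 1 := by rw [hxdef]; ring
  rw [hxy4] at hkey
  have hDcast : ((k₁:ℝ) + 1) * (((M + n₁ : ℕ) : ℝ) + ((k₁:ℝ) + 1)) ^ 4
      ≤ 2 * ((p.eval x - p.eval y : ℤ) : ℝ) := by
    calc ((k₁:ℝ) + 1) * (((M + n₁ : ℕ) : ℝ) + ((k₁:ℝ) + 1)) ^ 4
        = (((((k₁:ℤ) + 1) * x ^ 4 : ℤ) : ℝ)) := by rw [hxdef, hydef]; push_cast; ring
      _ ≤ ((2 * (p.eval x - p.eval y) : ℤ) : ℝ) := by exact_mod_cast hkey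
      _ = 2 * ((p.eval x - p.eval y : ℤ) : ℝ) := by push_cast; ring
  have hMr : (1:ℝ) ≤ (M:ℝ) := by exact_mod_cast hM1
  have hb := perpoint ((M + n₁ : ℕ) : ℝ) ((k₁:ℝ) + 1) ((p.eval x - p.eval y : ℤ) : ℝ)
    (by push_cast; linarith [Nat.cast_nonneg (α := ℝ) n₁])
    (by linarith [Nat.cast_nonneg (α := ℝ) k₁])
    ((n₁:ℝ) + 1)
    (by linarith [Nat.cast_nonneg (α := ℝ) n₁])
    (by push_cast; linarith)
    hDcast
  exact hb

theorem stmt_0 (p : Polynomial ℤ) (hdeg : 5 ≤ p.natDegree)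
    (hlead : 0 < p.leadingCoeff) :
    ∃ M : ℕ, Summable (fun nk : ℕ × ℕ =>
      1 / Real.sqrt ((p.eval ((M + nk.1 : ℕ) + (nk.2 + 1) : ℤ)
        - p.eval ((M + nk.1 : ℕ) : ℤ) : ℤ))) := by
  have ha : 1 ≤ p.leadingCoeff := hlead
  have hC0 : 0 ≤ (p.natDegree : ℤ) * ∑ i ∈ Finset.range p.natDegree, |p.coeff i| :=
    mul_nonneg (by positivity) (Finset.sum_nonneg fun i _ => abs_nonneg _)
  obtain ⟨M, hM⟩ : ∃ M : ℕ,
      (M : ℤ) = 2 * ((p.natDegree : ℤ) * ∑ i ∈ Finset.range p.natDegree, |p.coeff i|) + 1 :=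
    ⟨(2 * ((p.natDegree : ℤ) * ∑ i ∈ Finset.range p.natDegree, |p.coeff i|) + 1).toNat,
      Int.toNat_of_nonneg (by linarith)⟩
  refine ⟨M, ?_⟩
  have hsum1 : Summable (fun n : ℕ => ((n:ℝ)+1) ^ (-(5/4) : ℝ)) := by
    have h := Real.summable_nat_rpow.mpr (show (-(5/4):ℝ) < -1 by norm_num)
    have h2 := (summable_nat_add_iff 1).mpr h
    simpa using h2
  have hsum : Summable (fun nk : ℕ × ℕ =>
      Real.sqrt 2 * (((nk.1:ℝ)+1) ^ (-(5/4):ℝ) * ((nk.2:ℝ)+1) ^ (-(5/4):ℝ))) := by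
    apply Summable.mul_left
    exact hsum1.mul_of_nonneg hsum1 (fun n => Real.rpow_nonneg (by positivity) _)
      (fun n => Real.rpow_nonneg (by positivity) _)
  apply Summable.of_nonneg_of_le (fun nk => by positivity) _ hsum
  intro nk
  exact mainpoint p hdeg ha M hM nk.1 nk.2
end

section
/- Let a > 4 be a real number and h(n) = ⌊n^a⌋. Then there exists M ∈ ℕ such that ∑_{n=M}^∞ ∑_{k=1}^∞ 1/√(h(n+k) - h(n)) < ∞. -/
/-- Key floor estimate: for `n ≥ 2`, `k ≥ 1` and `a > 4`,
`⌊(n+k)^a⌋ - ⌊n^a⌋ ≥ (n*k)^(2+(a-4)/2) / 2`. -/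
lemma stmt_5_key (a : ℝ) (ha : 4 < a) (n k : ℕ) (hn : 2 ≤ n) (hk : 1 ≤ k) :
    ((n : ℝ) * k) ^ (2 + (a - 4) / 2) / 2
      ≤ ((⌊((n + k : ℕ) : ℝ) ^ a⌋ - ⌊((n : ℕ) : ℝ) ^ a⌋ : ℤ) : ℝ) := by
  have hN : (2 : ℝ) ≤ (n : ℝ) := by exact_mod_cast hn
  have hK : (1 : ℝ) ≤ (k : ℝ) := by exact_mod_cast hk
  have hNpos : (0 : ℝ) < n := by linarith
  have hKpos : (0 : ℝ) < k := by linarith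
  have hNK : (0 : ℝ) < (n : ℝ) * k := by positivity
  have hNKcast : ((n + k : ℕ) : ℝ) = (n : ℝ) + k := by push_cast; ring
  set N : ℝ := (n : ℝ)
  set K : ℝ := (k : ℝ)
  have hNKpos : (0 : ℝ) < N + K := by linarith
  have h4 : ∀ x : ℝ, x ^ (4 : ℝ) = x ^ (4 : ℕ) := fun x => by
    rw [← Real.rpow_natCast x 4]; norm_num
  -- Step 1: x - y ≥ (N+K)^(a-4) * ((N+K)^4 - N^4)
  have step1 : (N + K) ^ (a - 4) * ((N + K) ^ (4 : ℝ) - N ^ (4 : ℝ))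
      ≤ (N + K) ^ a - N ^ a := by
    have e1 : (N + K) ^ a = (N + K) ^ (a - 4) * (N + K) ^ (4 : ℝ) := by
      rw [← Real.rpow_add hNKpos]; ring_nf
    have e2 : N ^ a = N ^ (a - 4) * N ^ (4 : ℝ) := by
      rw [← Real.rpow_add hNpos]; ring_nf
    have m1 : N ^ (a - 4) ≤ (N + K) ^ (a - 4) :=
      Real.rpow_le_rpow (by linarith) (by linarith) (by linarith)
    have m2 : (0 : ℝ) ≤ N ^ (4 : ℝ) := Real.rpow_nonneg (by linarith) _
    rw [e1, e2]
    nlinarith [m1, m2]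
  -- Step 2: (N+K)^4 - N^4 ≥ N^2 K^2
  have step2 : N ^ 2 * K ^ 2 ≤ (N + K) ^ (4 : ℝ) - N ^ (4 : ℝ) := by
    rw [h4, h4]
    nlinarith [hN, hK]
  -- Step 3: (N+K)^(a-4) ≥ (N*K)^((a-4)/2)
  have step3 : (N * K) ^ ((a - 4) / 2) ≤ (N + K) ^ (a - 4) := by
    have hs : Real.sqrt (N * K) ≤ N + K := by
      rw [show N + K = Real.sqrt ((N + K) ^ 2) from (Real.sqrt_sq (by linarith)).symm]
      exact Real.sqrt_le_sqrt (by nlinarith)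
    have e : (N * K) ^ ((a - 4) / 2) = (Real.sqrt (N * K)) ^ (a - 4) := by
      rw [Real.sqrt_eq_rpow, ← Real.rpow_mul hNK.le]
      ring_nf
    rw [e]
    exact Real.rpow_le_rpow (Real.sqrt_nonneg _) hs (by linarith)
  -- Step 4: combine to get x - y ≥ (N*K)^(2+(a-4)/2)
  have step4 : (N * K) ^ (2 + (a - 4) / 2) ≤ (N + K) ^ a - N ^ a := by
    have e : (N * K) ^ (2 + (a - 4) / 2) = (N * K) ^ ((a - 4) / 2) * (N ^ 2 * K ^ 2) := by
      rw [show (2 : ℝ) + (a - 4) / 2 = (a - 4) / 2 + 2 by ring, Real.rpow_add hNK,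
        show ((N * K) ^ (2 : ℝ)) = (N * K) ^ (2 : ℕ) by
          rw [← Real.rpow_natCast (N * K) 2]; norm_num]
      ring
    have pos3 : (0 : ℝ) ≤ (N * K) ^ ((a - 4) / 2) := Real.rpow_nonneg hNK.le _
    calc (N * K) ^ (2 + (a - 4) / 2)
        = (N * K) ^ ((a - 4) / 2) * (N ^ 2 * K ^ 2) := e
      _ ≤ (N + K) ^ (a - 4) * ((N + K) ^ (4 : ℝ) - N ^ (4 : ℝ)) := by
          apply mul_le_mul step3 step2 (by positivity) (Real.rpow_nonneg hNKpos.le _)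
      _ ≤ (N + K) ^ a - N ^ a := step1
  -- Step 5: D ≥ 2
  have hD2 : (2 : ℝ) ≤ (N * K) ^ (2 + (a - 4) / 2) := by
    have h1 : (N * K) ^ (1 : ℝ) ≤ (N * K) ^ (2 + (a - 4) / 2) :=
      Real.rpow_le_rpow_of_exponent_le (by nlinarith) (by linarith)
    rw [Real.rpow_one] at h1
    nlinarith
  -- Step 6: floor estimate
  have hfl : (N + K) ^ a - 1 - N ^ a
      ≤ ((⌊((n + k : ℕ) : ℝ) ^ a⌋ - ⌊((n : ℕ) : ℝ) ^ a⌋ : ℤ) : ℝ) := by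
    push_cast
    have h1 := Int.sub_one_lt_floor ((N + K) ^ a)
    have h2 := Int.floor_le (N ^ a)
    linarith
  nlinarith [step4, hD2, hfl]

set_option maxHeartbeats 1000000 in
theorem stmt_5 (a : ℝ) (ha : 4 < a) (h : ℕ → ℤ)
    (hh : ∀ n : ℕ, h n = ⌊(n : ℝ) ^ a⌋) :
    ∃ M : ℕ, Summable (fun nk : ℕ × ℕ =>
      1 / Real.sqrt ((h (M + nk.1 + (nk.2 + 1)) - h (M + nk.1) : ℤ))) := by
  use 2
  obtain ⟨p, hpdef⟩ : ∃ p : ℝ, p = 1 + (a - 4) / 4 := ⟨_, rfl⟩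
  have hp1 : 1 < p := by rw [hpdef]; linarith
  have hbase := Real.summable_nat_rpow_inv.2 hp1
  have hsum : Summable (fun nk : ℕ × ℕ =>
      (Real.sqrt 2 * (((2 + nk.1 : ℕ) : ℝ) ^ p)⁻¹) * ((((nk.2 + 1 : ℕ)) : ℝ) ^ p)⁻¹) := by
    have h1 : Summable (fun i : ℕ => Real.sqrt 2 * (((2 + i : ℕ) : ℝ) ^ p)⁻¹) := by
      apply Summable.mul_left
      have := (summable_nat_add_iff 2).2 hbase
      apply this.congr
      intro i
      simp [add_comm]
    have h2 : Summable (fun j : ℕ => ((((j + 1 : ℕ)) : ℝ) ^ p)⁻¹) :=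
      (summable_nat_add_iff 1).2 hbase
    exact Summable.mul_of_nonneg h1 h2 (fun i => by positivity) (fun j => by positivity)
  apply Summable.of_nonneg_of_le (fun nk => by positivity) _ hsum
  rintro ⟨i, j⟩
  simp only
  obtain ⟨n, hn⟩ : ∃ n : ℕ, n = 2 + i := ⟨_, rfl⟩
  obtain ⟨k, hk⟩ : ∃ k : ℕ, k = j + 1 := ⟨_, rfl⟩
  have hidx : 2 + i + (j + 1) = n + k := by omega
  rw [← hn, ← hk]
  rw [hh, hh]
  have key := stmt_5_key a ha n k (by omega) (by omega)
  obtain ⟨D, hD⟩ : ∃ D : ℝ, D = ((n : ℝ) * k) ^ (2 + (a - 4) / 2) := ⟨_, rfl⟩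
  rw [← hD] at key
  have hNK : (0 : ℝ) < (n : ℝ) * k := by
    have : (0:ℕ) < n := by omega
    have : (0:ℕ) < k := by omega
    positivity
  have hDpos : 0 < D := hD ▸ Real.rpow_pos_of_pos hNK _
  have hsq : Real.sqrt (D / 2) ≤ Real.sqrt (((⌊((n + k : ℕ) : ℝ) ^ a⌋ - ⌊((n : ℕ) : ℝ) ^ a⌋ : ℤ) : ℝ)) :=
    Real.sqrt_le_sqrt key
  have hsqpos : 0 < Real.sqrt (D / 2) := Real.sqrt_pos.2 (by positivity)
  have hle : 1 / Real.sqrt (((⌊((n + k : ℕ) : ℝ) ^ a⌋ - ⌊((n : ℕ) : ℝ) ^ a⌋ : ℤ) : ℝ))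
      ≤ 1 / Real.sqrt (D / 2) := by
    apply one_div_le_one_div_of_le hsqpos hsq
  refine hle.trans ?_
  -- compute 1 / √(D/2) = √2 * (n^p)⁻¹ * (k^p)⁻¹
  have hsqD : Real.sqrt D = ((n : ℝ) ^ p) * ((k : ℝ) ^ p) := by
    rw [hD, Real.sqrt_eq_rpow, ← Real.rpow_mul hNK.le,
      show (2 + (a - 4) / 2) * (1 / 2 : ℝ) = p by rw [hpdef]; ring,
      Real.mul_rpow (by positivity) (by positivity)]
  rw [Real.sqrt_div hDpos.le, hsqD]
  have h2 : (0:ℝ) < Real.sqrt 2 := by positivity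
  have hnp : (0:ℝ) < (n : ℝ) ^ p :=
    Real.rpow_pos_of_pos (by exact_mod_cast Nat.pos_of_ne_zero (by omega)) _
  have hkp : (0:ℝ) < (k : ℝ) ^ p :=
    Real.rpow_pos_of_pos (by exact_mod_cast Nat.pos_of_ne_zero (by omega)) _
  have e : 1 / ((n : ℝ) ^ p * (k : ℝ) ^ p / Real.sqrt 2)
      = Real.sqrt 2 * (((n : ℝ) ^ p)⁻¹) * (((k : ℝ) ^ p)⁻¹) := by
    field_simp
  rw [e]
end

section
/- Define h : ℕ → ℤ by h(n) = ⌊n/2⌋^5 + (-1)^{n+1}. Then h is strictly increasing on {n ∈ ℕ : n ≥ 3}, lim_{n→∞} h(n)/n^{4+ε} = ∞ for every ε ∈ (0,1), and yet ∑_{n=3}^∞ ∑_{k=1}^∞ 1/√(h(n+k) - h(n)) = ∞. -/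
theorem stmt_7 (h : ℕ → ℤ)
    (hh : ∀ n : ℕ, h n = ((n / 2 : ℕ) : ℤ) ^ 5 + (-1) ^ (n + 1)) :
    StrictMonoOn h {n : ℕ | 3 ≤ n} ∧
    (∀ ε : ℝ, ε ∈ Set.Ioo (0 : ℝ) 1 →
      Filter.Tendsto (fun n : ℕ => (h n : ℝ) / (n : ℝ) ^ ((4 : ℝ) + ε))
        Filter.atTop Filter.atTop) ∧
    ¬ Summable (fun nk : ℕ × ℕ =>
      1 / Real.sqrt ((h (3 + nk.1 + (nk.2 + 1)) - h (3 + nk.1) : ℤ))) := by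
  refine ⟨?_, ?_, ?_⟩
  · -- strict monotonicity
    have key : ∀ a : ℕ, 3 ≤ a → h a < h (a + 1) := by
      intro a ha
      rcases Nat.even_or_odd a with ⟨m, hm⟩ | ⟨m, hm⟩
      · subst hm
        have hm2 : 2 ≤ m := by omega
        have e1 : (m + m) / 2 = m := by omega
        have e2 : (m + m + 1) / 2 = m := by omega
        have o1 : Odd (m + m + 1) := ⟨m, by ring⟩
        have e3 : Even (m + m + 1 + 1) := ⟨m + 1, by ring⟩
        rw [hh, hh, e1, e2, o1.neg_one_pow, e3.neg_one_pow]
        omega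
      · subst hm
        have hm1 : 1 ≤ m := by omega
        have e1 : (2 * m + 1) / 2 = m := by omega
        have e2 : (2 * m + 1 + 1) / 2 = m + 1 := by omega
        have e3 : Even (2 * m + 1 + 1) := ⟨m + 1, by ring⟩
        have o1 : Odd (2 * m + 1 + 1 + 1) := ⟨m + 1, by ring⟩
        rw [hh, hh, e1, e2, e3.neg_one_pow, o1.neg_one_pow]
        have hmz : (1 : ℤ) ≤ (m : ℤ) := by exact_mod_cast hm1
        push_cast
        nlinarith [pow_pos (by linarith : (0:ℤ) < (m:ℤ)) 4,
          pow_pos (by linarith : (0:ℤ) < (m:ℤ)) 3]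
    have : StrictMonoOn h (Set.Ici 3) := by
      apply strictMonoOn_of_lt_succ Set.ordConnected_Ici
      intro a _ ha _
      simpa using key a ha
    exact this
  · -- growth
    intro ε hε
    obtain ⟨hε0, hε1⟩ := hε
    have hbase : Filter.Tendsto (fun n : ℕ => (n : ℝ) ^ ((1:ℝ) - ε) / 243 - 1)
        Filter.atTop Filter.atTop := by
      have h1 : Filter.Tendsto (fun x : ℝ => x ^ ((1:ℝ) - ε)) Filter.atTop Filter.atTop :=
        tendsto_rpow_atTop (by linarith)
      have h2 := (h1.comp (tendsto_natCast_atTop_atTop (R := ℝ))).atTop_div_const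
        (by norm_num : (0:ℝ) < 243)
      simpa [Function.comp, sub_eq_add_neg] using
        Filter.tendsto_atTop_add_const_right _ (-1 : ℝ) h2
    apply Filter.tendsto_atTop_mono' _ _ hbase
    filter_upwards [Filter.eventually_ge_atTop 3] with n hn
    set x : ℝ := (n : ℝ) with hxdef
    have hx3 : (3 : ℝ) ≤ x := by rw [hxdef]; exact_mod_cast hn
    have hx0 : (0 : ℝ) < x := by linarith
    have hx1 : (1 : ℝ) ≤ x := by linarith
    have hp : (0 : ℝ) < x ^ ((4:ℝ) + ε) := Real.rpow_pos_of_pos hx0 _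
    rw [le_div_iff₀ hp]
    -- h n ≥ (x/3)^5 - 1
    have hm : n ≤ 3 * (n / 2) := by omega
    have hm' : x / 3 ≤ ((n / 2 : ℕ) : ℝ) := by
      have : x ≤ 3 * ((n / 2 : ℕ) : ℝ) := by rw [hxdef]; exact_mod_cast hm
      linarith
    have h5 : (x / 3) ^ 5 - 1 ≤ (h n : ℝ) := by
      rw [hh n, Int.cast_add, Int.cast_pow, Int.cast_natCast, Int.cast_pow,
        Int.cast_neg, Int.cast_one]
      have hpow : (x / 3) ^ 5 ≤ ((n / 2 : ℕ) : ℝ) ^ 5 :=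
        pow_le_pow_left₀ (by positivity) hm' 5
      rcases Nat.even_or_odd (n + 1) with he | ho
      · rw [he.neg_one_pow]; linarith
      · rw [ho.neg_one_pow]; linarith
    have hxx : x ^ ((1:ℝ) - ε) * x ^ ((4:ℝ) + ε) = x ^ 5 := by
      rw [← Real.rpow_add hx0, ← Real.rpow_natCast x 5]
      norm_num
    have hone : (1 : ℝ) ≤ x ^ ((4:ℝ) + ε) := by
      have := Real.rpow_le_rpow_of_exponent_le hx1 (show (0:ℝ) ≤ 4 + ε by linarith)
      rwa [Real.rpow_zero] at this
    have expand : (x ^ ((1:ℝ) - ε) / 243 - 1) * x ^ ((4:ℝ) + ε)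
        = x ^ 5 / 243 - x ^ ((4:ℝ) + ε) := by
      rw [sub_mul, one_mul, div_mul_eq_mul_div, hxx]
    have e2 : (x / 3) ^ 5 = x ^ 5 / 243 := by ring
    rw [expand]
    linarith
  · -- non-summability
    intro hs
    have hinj : Function.Injective (fun n : ℕ => ((2 * n + 1, 0) : ℕ × ℕ)) := by
      intro a b hab
      simpa using hab
    have hs2 := hs.comp_injective hinj
    have hval : ∀ n : ℕ,
        (1 : ℝ) / Real.sqrt ((h (3 + (2 * n + 1) + (0 + 1)) - h (3 + (2 * n + 1)) : ℤ))
          = 1 / Real.sqrt 2 := by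
      intro n
      have e1 : 3 + (2 * n + 1) + (0 + 1) = 2 * n + 5 := by ring
      have e2 : 3 + (2 * n + 1) = 2 * n + 4 := by ring
      have d1 : (2 * n + 5) / 2 = n + 2 := by omega
      have d2 : (2 * n + 4) / 2 = n + 2 := by omega
      have o1 : Even (2 * n + 5 + 1) := ⟨n + 3, by ring⟩
      have o2 : Odd (2 * n + 4 + 1) := ⟨n + 2, by ring⟩
      rw [e1, e2, hh, hh, d1, d2, o1.neg_one_pow, o2.neg_one_pow]
      norm_num
    have hs3 : Summable (fun _ : ℕ => (1 : ℝ) / Real.sqrt 2) := by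
      have := hs2
      exact this.congr hval
    have := (summable_const_iff _).mp hs3
    have h2 : (0 : ℝ) < Real.sqrt 2 := Real.sqrt_pos.mpr (by norm_num)
    rw [div_eq_zero_iff] at this
    rcases this with h' | h'
    · norm_num at h'
    · linarith
end

section
/- Let s > 2 and define h(n) = ⌊n^4 (log n)^s⌋. Then there exists M ∈ ℕ such that ∑_{n=M}^∞ ∑_{k=1}^∞ 1/√(h(n+k) - h(n)) < ∞. -/
open Real

lemma two_le_log_nine' : (2:ℝ) ≤ Real.log 9 := by
  have h3 : (1:ℝ) < Real.log 3 := by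
    rw [Real.lt_log_iff_exp_lt (by norm_num)]
    calc Real.exp 1 < 2.7182818286 := Real.exp_one_lt_d9
      _ < 3 := by norm_num
  have h9 : (9:ℝ) = 3^2 := by norm_num
  rw [h9, Real.log_pow]
  push_cast; linarith


lemma sqrt_sum_le' (j : ℕ) :
    ∑ k ∈ Finset.range (j+1), 1 / Real.sqrt (k+1) ≤ 2 * Real.sqrt (j+1) := by
  have key : ∀ k : ℕ, 1 / Real.sqrt (k+1) ≤ 2 * (Real.sqrt (k+1) - Real.sqrt k) := by
    intro k
    have hb : (0:ℝ) < Real.sqrt (k+1) := Real.sqrt_pos.mpr (by positivity)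
    have ha : (0:ℝ) ≤ Real.sqrt k := Real.sqrt_nonneg _
    have hb2 : (Real.sqrt (k+1))^2 = (k:ℝ)+1 := Real.sq_sqrt (by positivity)
    have ha2 : (Real.sqrt k)^2 = (k:ℝ) := Real.sq_sqrt (by positivity)
    rw [div_le_iff₀ hb]
    nlinarith [sq_nonneg (Real.sqrt (k+1) - Real.sqrt k)]
  calc ∑ k ∈ Finset.range (j+1), 1 / Real.sqrt (k+1)
      ≤ ∑ k ∈ Finset.range (j+1), 2 * (Real.sqrt (k+1) - Real.sqrt k) :=
        Finset.sum_le_sum fun k _ => key k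
    _ = 2 * (Real.sqrt (j+1) - Real.sqrt 0) := by
        have := Finset.sum_range_sub (fun k : ℕ => Real.sqrt (k:ℝ)) (j+1)
        push_cast at this ⊢
        rw [← Finset.mul_sum, this]
    _ ≤ 2 * Real.sqrt (j+1) := by simp [Real.sqrt_nonneg]

lemma logF_mono {s : ℝ} (hs : 0 ≤ s) {a b : ℕ} (h9 : 9 ≤ a) (hab : a ≤ b) :
    ((a:ℝ))^2 * (Real.log a) ^ s ≤ ((b:ℝ))^2 * (Real.log b) ^ s := by
  have ha : (9:ℝ) ≤ a := by exact_mod_cast h9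
  have hab' : (a:ℝ) ≤ b := by exact_mod_cast hab
  have hla : 0 ≤ Real.log a := Real.log_nonneg (by linarith)
  have hlog : Real.log a ≤ Real.log b := Real.log_le_log (by linarith) hab'
  have h1 : (Real.log a) ^ s ≤ (Real.log b) ^ s := Real.rpow_le_rpow hla hlog hs
  have h2 : ((a:ℝ))^2 ≤ ((b:ℝ))^2 := by nlinarith
  have : 0 ≤ (Real.log b) ^ s := Real.rpow_nonneg (hla.trans hlog) s
  nlinarith [Real.rpow_nonneg hla s, sq_nonneg (a:ℝ)]

lemma sumA' {s : ℝ} (hs : 2 < s) :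
    Summable (fun j : ℕ => 1 / Real.sqrt (((j:ℝ)+9)^2 * (Real.log ((j:ℝ)+9)) ^ s)) := by
  set F : ℕ → ℝ := fun n => 1 / Real.sqrt (((max n 9 : ℕ):ℝ)^2 * (Real.log (max n 9 : ℕ)) ^ s) with hF
  have hnn : ∀ n, 0 ≤ F n := fun n => by positivity
  have hmono : ∀ ⦃m n : ℕ⦄, 0 < m → m ≤ n → F n ≤ F m := by
    intro m n _ hmn
    have h1 : ((max m 9 : ℕ):ℝ)^2 * (Real.log (max m 9 : ℕ)) ^ s
        ≤ ((max n 9 : ℕ):ℝ)^2 * (Real.log (max n 9 : ℕ)) ^ s :=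
      logF_mono (by linarith) (le_max_right _ _) (max_le_max hmn le_rfl)
    have hpos : 0 < Real.sqrt (((max m 9 : ℕ):ℝ)^2 * (Real.log (max m 9 : ℕ)) ^ s) := by
      apply Real.sqrt_pos.mpr
      have : (9:ℝ) ≤ ((max m 9 : ℕ):ℝ) := by exact_mod_cast le_max_right m 9
      have hl : 0 < Real.log (max m 9 : ℕ) := Real.log_pos (by linarith)
      positivity
    exact one_div_le_one_div_of_le hpos (Real.sqrt_le_sqrt h1)
  -- condensation
  have hcond : Summable (fun k : ℕ => (2:ℝ) ^ k * F (2 ^ k)) := by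
    rw [← summable_nat_add_iff 4]
    have hcomp : Summable (fun k : ℕ => (2:ℝ) ^ (s/2) * (1 / ((k:ℝ)+1) ^ (s/2))) := by
      apply Summable.mul_left
      have : Summable (fun k : ℕ => 1 / ((k:ℝ)) ^ (s/2)) :=
        Real.summable_one_div_nat_rpow.mpr (by linarith)
      have := (summable_nat_add_iff 1).mpr this
      simpa using this
    apply Summable.of_nonneg_of_le (fun k => by positivity) _ hcomp
    intro k
    have h16 : 9 ≤ 2 ^ (k+4) := by
      calc 9 ≤ 2^4 := by norm_num
        _ ≤ 2^(k+4) := Nat.pow_le_pow_right (by norm_num) (by omega)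
    have hmax : max (2^(k+4)) 9 = 2^(k+4) := max_eq_left h16
    have hcast : (((2:ℕ)^(k+4) : ℕ):ℝ) = (2:ℝ)^(k+4) := by push_cast; ring
    have hlog2 : Real.log (((2:ℕ)^(k+4) : ℕ):ℝ) = ((k:ℝ)+4) * Real.log 2 := by
      rw [hcast, Real.log_pow]; push_cast; ring
    have hl2 : (0.6931:ℝ) < Real.log 2 := by
      have := Real.log_two_gt_d9; linarith
    have hhalf : ((k:ℝ)+1)/2 ≤ ((k:ℝ)+4) * Real.log 2 := by nlinarith
    have hsq : ((2:ℝ)^(k+4)) * (((k:ℝ)+1) ^ (s/2) / (2:ℝ)^(s/2))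
        ≤ Real.sqrt ((((2:ℕ)^(k+4) : ℕ):ℝ)^2 * (Real.log (((2:ℕ)^(k+4) : ℕ):ℝ)) ^ s) := by
      rw [Real.le_sqrt (by positivity) (by rw [hlog2]; positivity)]
      rw [hlog2, mul_pow, hcast]
      have hexp : ((((k:ℝ)+1) ^ (s/2) / (2:ℝ)^(s/2)))^2 = (((k:ℝ)+1)/2) ^ s := by
        rw [div_pow, ← Real.rpow_natCast (((k:ℝ)+1)^(s/2)) 2, ← Real.rpow_natCast ((2:ℝ)^(s/2)) 2,
          ← Real.rpow_mul (by positivity), ← Real.rpow_mul (by norm_num)]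
        push_cast
        rw [div_rpow (by positivity) (by norm_num)]
        norm_num
      rw [hexp]
      exact mul_le_mul_of_nonneg_left
        (Real.rpow_le_rpow (by positivity) hhalf (by linarith)) (by positivity)
    have hpos2 : (0:ℝ) < ((2:ℝ)^(k+4)) * (((k:ℝ)+1) ^ (s/2) / (2:ℝ)^(s/2)) := by positivity
    calc (2:ℝ) ^ (k+4) * F (2 ^ (k+4))
        = (2:ℝ)^(k+4) / Real.sqrt ((((2:ℕ)^(k+4) : ℕ):ℝ)^2 * (Real.log (((2:ℕ)^(k+4) : ℕ):ℝ)) ^ s) := by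
          simp only [hF, hmax]
          ring
      _ ≤ (2:ℝ)^(k+4) / (((2:ℝ)^(k+4)) * (((k:ℝ)+1) ^ (s/2) / (2:ℝ)^(s/2))) := by
          apply div_le_div_of_nonneg_left (by positivity) hpos2 hsq
      _ = (2:ℝ) ^ (s/2) * (1 / ((k:ℝ)+1) ^ (s/2)) := by
          rw [div_mul_eq_div_div, div_self (by positivity)]
          field_simp
  have hsumF : Summable F := (summable_condensed_iff_of_nonneg hnn hmono).mp hcond
  have := (summable_nat_add_iff 9).mpr hsumF
  apply this.congr
  intro j
  simp only [hF]
  have : max (j + 9) 9 = j + 9 := max_eq_left (by omega)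
  rw [this]
  push_cast
  ring_nf

lemma diff_ge (s : ℝ) (hs : 2 < s) (h : ℕ → ℤ)
    (hh : ∀ n : ℕ, h n = ⌊(n : ℝ) ^ 4 * (Real.log n) ^ s⌋) (n k : ℕ) :
    (1/2) * (((k:ℝ)+1) * ((((n:ℝ)+(k:ℝ)+9)^3) * (Real.log ((n:ℝ)+(k:ℝ)+9)) ^ s))
      ≤ ((h (8+n+(k+1)) - h (8+n) : ℤ) : ℝ) := by
  set A : ℝ := (n:ℝ)+(k:ℝ)+9 with hA
  set B : ℝ := (n:ℝ)+8 with hB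
  have hAc : ((8+n+(k+1) : ℕ):ℝ) = A := by rw [hA]; push_cast; ring
  have hBc : ((8+n : ℕ):ℝ) = B := by rw [hB]; push_cast; ring
  have hn0 : (0:ℝ) ≤ (n:ℝ) := Nat.cast_nonneg n
  have hk0 : (0:ℝ) ≤ (k:ℝ) := Nat.cast_nonneg k
  have hA9 : (9:ℝ) ≤ A := by rw [hA]; linarith
  have hB8 : (8:ℝ) ≤ B := by rw [hB]; linarith
  have hBA : B + ((k:ℝ)+1) = A := by rw [hA, hB]; ring
  set L : ℝ := Real.log A with hL
  have hL2 : (2:ℝ) ≤ L := by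
    calc (2:ℝ) ≤ Real.log 9 := two_le_log_nine'
      _ ≤ L := Real.log_le_log (by norm_num) hA9
  have hlogB0 : 0 ≤ Real.log B := Real.log_nonneg (by linarith)
  have hlogBA : Real.log B ≤ L := Real.log_le_log (by linarith) (by linarith)
  have hLs : (Real.log B) ^ s ≤ L ^ s := Real.rpow_le_rpow hlogB0 hlogBA (by linarith)
  have hLs4 : (4:ℝ) ≤ L ^ s := by
    have h1 : (2:ℝ)^(2:ℝ) ≤ (2:ℝ)^s := Real.rpow_le_rpow_of_exponent_le one_le_two hs.le
    have h2 : (2:ℝ)^s ≤ L^s := Real.rpow_le_rpow (by norm_num) hL2 (by linarith)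
    have h0 : (2:ℝ)^(2:ℝ) = 4 := by
      rw [show (2:ℝ) = ((2:ℕ):ℝ) from by norm_num, Real.rpow_natCast]
      norm_num
    linarith
  -- floor bounds
  have hfl1 : A^4 * L^s - 1 < ((h (8+n+(k+1)) : ℤ) : ℝ) := by
    rw [hh, hAc]
    exact Int.sub_one_lt_floor _
  have hfl2 : ((h (8+n) : ℤ) : ℝ) ≤ B^4 * (Real.log B)^s := by
    rw [hh, hBc]
    exact Int.floor_le _
  -- polynomial bound
  have hpoly : ((k:ℝ)+1) * A^3 ≤ A^4 - B^4 := by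
    have hfac : A^4 - B^4 - ((k:ℝ)+1)*A^3 = B * ((A^3 - B^3)) := by
      rw [← hBA]; ring
    have hBA3 : B^3 ≤ A^3 := pow_le_pow_left₀ (by linarith) (by linarith) 3
    nlinarith [mul_nonneg (show (0:ℝ) ≤ B by linarith) (show (0:ℝ) ≤ A^3 - B^3 by linarith)]
  have hmul : ((k:ℝ)+1) * A^3 * L^s ≤ (A^4 - B^4) * L^s :=
    mul_le_mul_of_nonneg_right hpoly (by positivity)
  have hB4 : B^4 * (Real.log B)^s ≤ B^4 * L^s :=
    mul_le_mul_of_nonneg_left hLs (by positivity)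
  have h2le : (2:ℝ) ≤ ((k:ℝ)+1) * A^3 * L^s := by
    have hk1 : (1:ℝ) ≤ (k:ℝ)+1 := by linarith
    have hA3 : (1:ℝ) ≤ A^3 := by
      have : (1:ℝ)^3 ≤ A^3 := pow_le_pow_left₀ (by norm_num) (by linarith) 3
      linarith
    have hKA : (1:ℝ) ≤ ((k:ℝ)+1)*A^3 := by nlinarith
    have := mul_le_mul hKA hLs4 (by norm_num) (by positivity)
    linarith
  have final : (1/2) * (((k:ℝ)+1) * (A^3 * L^s)) ≤ ((h (8+n+(k+1)) : ℤ):ℝ) - ((h (8+n) : ℤ):ℝ) := by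
    clear_value L A B
    have hr1 : (A^4 - B^4)*L^s = A^4*L^s - B^4*L^s := by ring
    have hr2 : ((k:ℝ)+1)*A^3*L^s = ((k:ℝ)+1)*(A^3*L^s) := by ring
    linarith
  push_cast at final ⊢
  linarith

noncomputable def Ghat (s : ℝ) : ℕ × ℕ → ℝ := fun p =>
  if p.2 ≤ p.1 then
    Real.sqrt 2 / (Real.sqrt ((p.2:ℝ)+1) *
      Real.sqrt ((((p.1:ℝ)+9)^3) * (Real.log ((p.1:ℝ)+9)) ^ s))
  else 0

lemma Ghat_nonneg (s : ℝ) (p : ℕ × ℕ) : 0 ≤ Ghat s p := by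
  unfold Ghat
  split
  · positivity
  · exact le_refl 0

lemma Ghat_summable {s : ℝ} (hs : 2 < s) : Summable (Ghat s) := by
  rw [summable_prod_of_nonneg (Ghat_nonneg s)]
  constructor
  · intro j
    apply summable_of_ne_finset_zero (s := Finset.range (j+1))
    intro t ht
    rw [Finset.mem_range, not_lt] at ht
    unfold Ghat
    rw [if_neg (by omega)]
  · have hlogpos : ∀ j : ℕ, 0 < Real.log ((j:ℝ)+9) := by
      intro j
      have h0 : (0:ℝ) ≤ (j:ℝ) := Nat.cast_nonneg j
      have h1 : Real.log 9 ≤ Real.log ((j:ℝ)+9) := Real.log_le_log (by norm_num) (by linarith)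
      linarith [two_le_log_nine']
    set E : ℕ → ℝ := fun j => Real.sqrt ((((j:ℝ)+9)^2) * (Real.log ((j:ℝ)+9)) ^ s) with hE
    set D : ℕ → ℝ := fun j => Real.sqrt ((((j:ℝ)+9)^3) * (Real.log ((j:ℝ)+9)) ^ s) with hD
    have hEpos : ∀ j : ℕ, 0 < E j := by
      intro j
      apply Real.sqrt_pos.mpr
      have h0 : (0:ℝ) ≤ (j:ℝ) := Nat.cast_nonneg j
      have := hlogpos j
      positivity
    have hDE : ∀ j : ℕ, D j = Real.sqrt ((j:ℝ)+9) * E j := by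
      intro j
      simp only [hD, hE]
      have h0 : (0:ℝ) ≤ (j:ℝ) := Nat.cast_nonneg j
      rw [show (((j:ℝ)+9)^3) * (Real.log ((j:ℝ)+9)) ^ s
          = ((j:ℝ)+9) * ((((j:ℝ)+9)^2) * (Real.log ((j:ℝ)+9)) ^ s) from by ring,
        Real.sqrt_mul (by linarith)]
    apply Summable.of_nonneg_of_le
      (fun j => tsum_nonneg (fun t => Ghat_nonneg s (j, t)))
      ?_ ((sumA' hs).mul_left (2*Real.sqrt 2))
    intro j
    have h0 : (0:ℝ) ≤ (j:ℝ) := Nat.cast_nonneg j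
    have htsum : ∑' t, Ghat s (j,t)
        = ∑ t ∈ Finset.range (j+1), Real.sqrt 2 / (Real.sqrt ((t:ℝ)+1) * D j) := by
      rw [tsum_eq_sum (s := Finset.range (j+1))
        (by intro t ht; rw [Finset.mem_range, not_lt] at ht; unfold Ghat; rw [if_neg (by omega)])]
      apply Finset.sum_congr rfl
      intro t ht
      rw [Finset.mem_range] at ht
      unfold Ghat
      rw [if_pos (by omega)]
    rw [htsum]
    calc ∑ t ∈ Finset.range (j+1), Real.sqrt 2 / (Real.sqrt ((t:ℝ)+1) * D j)
        = (Real.sqrt 2 / D j) * ∑ t ∈ Finset.range (j+1), 1 / Real.sqrt ((t:ℝ)+1) := by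
          rw [Finset.mul_sum]
          apply Finset.sum_congr rfl
          intro t _
          ring
      _ ≤ (Real.sqrt 2 / D j) * (2 * Real.sqrt ((j:ℝ)+1)) := by
          apply mul_le_mul_of_nonneg_left _ (by positivity)
          have := sqrt_sum_le' j
          convert this using 2 <;> push_cast <;> ring
      _ ≤ 2*Real.sqrt 2 * (1 / Real.sqrt ((((j:ℝ)+9)^2) * (Real.log ((j:ℝ)+9)) ^ s)) := by
          rw [hDE j]
          have h1 : Real.sqrt ((j:ℝ)+1) ≤ Real.sqrt ((j:ℝ)+9) := Real.sqrt_le_sqrt (by linarith)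
          have hsqjpos : (0:ℝ) < Real.sqrt ((j:ℝ)+9) := Real.sqrt_pos.mpr (by linarith)
          have key : Real.sqrt ((j:ℝ)+1) / Real.sqrt ((j:ℝ)+9) ≤ 1 :=
            div_le_one_of_le₀ h1 (by positivity)
          have expand : (Real.sqrt 2 / (Real.sqrt ((j:ℝ)+9) * E j)) * (2*Real.sqrt ((j:ℝ)+1))
              = (2*Real.sqrt 2 * (1/E j)) * (Real.sqrt ((j:ℝ)+1)/Real.sqrt ((j:ℝ)+9)) := by
            field_simp
          rw [expand]
          have : (2*Real.sqrt 2 * (1/E j)) * (Real.sqrt ((j:ℝ)+1)/Real.sqrt ((j:ℝ)+9))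
              ≤ (2*Real.sqrt 2 * (1/E j)) * 1 :=
            mul_le_mul_of_nonneg_left key (by positivity)
          simpa [hE] using this

theorem stmt_8 (s : ℝ) (hs : 2 < s) (h : ℕ → ℤ)
    (hh : ∀ n : ℕ, h n = ⌊(n : ℝ) ^ 4 * (Real.log n) ^ s⌋) :
    ∃ M : ℕ, Summable (fun nk : ℕ × ℕ =>
      1 / Real.sqrt ((h (M + nk.1 + (nk.2 + 1)) - h (M + nk.1) : ℤ))) := by
  refine ⟨8, ?_⟩
  have hι : Function.Injective (fun p : ℕ × ℕ => (p.1 + p.2, p.2)) := by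
    intro p q hpq
    simp only [Prod.mk.injEq] at hpq
    exact Prod.ext (by omega) hpq.2
  have hG : Summable ((Ghat s) ∘ (fun p : ℕ × ℕ => (p.1 + p.2, p.2))) :=
    (Ghat_summable hs).comp_injective hι
  apply Summable.of_nonneg_of_le
    (fun p => one_div_nonneg.mpr (Real.sqrt_nonneg _)) _ hG
  rintro ⟨n, k⟩
  simp only [Function.comp_apply]
  show 1 / Real.sqrt ((h (8 + n + (k + 1)) - h (8 + n) : ℤ)) ≤ Ghat s (n + k, k)
  unfold Ghat
  rw [if_pos (Nat.le_add_left k n)]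
  have hcast : ((n+k : ℕ):ℝ) + 9 = (n:ℝ)+(k:ℝ)+9 := by push_cast; ring
  simp only [hcast]
  have hn0 : (0:ℝ) ≤ (n:ℝ) := Nat.cast_nonneg n
  have hk0 : (0:ℝ) ≤ (k:ℝ) := Nat.cast_nonneg k
  have hL : 0 < Real.log ((n:ℝ)+(k:ℝ)+9) := by
    have h1 : Real.log 9 ≤ Real.log ((n:ℝ)+(k:ℝ)+9) := Real.log_le_log (by norm_num) (by linarith)
    linarith [two_le_log_nine']
  have hdg := diff_ge s hs h hh n k
  have hpos : 0 < Real.sqrt ((1/2) * (((k:ℝ)+1) *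
      ((((n:ℝ)+(k:ℝ)+9)^3) * (Real.log ((n:ℝ)+(k:ℝ)+9)) ^ s))) :=
    Real.sqrt_pos.mpr (by positivity)
  have step1 : 1 / Real.sqrt ((h (8 + n + (k + 1)) - h (8 + n) : ℤ))
      ≤ 1 / Real.sqrt ((1/2) * (((k:ℝ)+1) *
        ((((n:ℝ)+(k:ℝ)+9)^3) * (Real.log ((n:ℝ)+(k:ℝ)+9)) ^ s))) :=
    one_div_le_one_div_of_le hpos (Real.sqrt_le_sqrt hdg)
  refine step1.trans (le_of_eq ?_)
  rw [Real.sqrt_mul (by norm_num : (0:ℝ) ≤ 1/2),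
    Real.sqrt_mul (by positivity : (0:ℝ) ≤ (k:ℝ)+1),
    show (1/2:ℝ) = (2:ℝ)⁻¹ from by norm_num, Real.sqrt_inv]
  have h2 : Real.sqrt 2 ≠ 0 := by positivity
  have hk : Real.sqrt ((k:ℝ)+1) ≠ 0 := by positivity
  have hR : Real.sqrt ((((n:ℝ)+(k:ℝ)+9)^3) * (Real.log ((n:ℝ)+(k:ℝ)+9)) ^ s) ≠ 0 := by
    have : (0:ℝ) < (((n:ℝ)+(k:ℝ)+9)^3) * (Real.log ((n:ℝ)+(k:ℝ)+9)) ^ s := by positivity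
    positivity
  field_simp
end

section
/- Let (Y, m, R) be an ergodic measure-preserving system and f ∈ L²(Y, m) with ∫ f dm = 0. For y ∈ Y and N ∈ ℕ, let a_N(y) be the cardinality of the set {S_n f(y) : 0 ≤ n ≤ N-1} where S_n f = ∑_{k=0}^{n-1} f∘R^k takes integer values. Then for m-a.e. y, lim_{N→∞} a_N(y)/N = 0. -/
/-!
By Birkhoff's ergodic theorem `S_n f(y) = o(n)` for a.e. `y`, so the first `N` sums are integers
in an interval of length `o(N)` about `0`, and there are only `o(N)` of them.

Birkhoff's theorem is proved through Garsia's maximal inequality: if `∫ h < 0`, the set where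
`sup_n S_n h = ∞` is invariant (since `S_{n+1} h = h + S_n h ∘ R`), hence null or conull by
ergodicity; it lies inside `{y | ∃ n, 0 < S_n h y}`, over which `∫ h ≥ 0` by Garsia, so it cannot
be conull. Applying this to `± f - ε` gives `|S_n f| ≤ ε n + C` for every `ε > 0`.
-/

open MeasureTheory Filter Topology

theorem tendsto_div_natCast_zero_iff {u : ℕ → ℝ} :
    Tendsto (fun n => u n / n) atTop (𝓝 0) ↔ ∀ ε > 0, ∃ C, ∀ n, |u n| ≤ ε * n + C := by
  constructor
  · intro hu ε hε
    obtain ⟨n₀, hn₀⟩ := Metric.tendsto_atTop.1 hu ε hε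
    -- `u 0 / 0 = 0` says nothing about `u 0`, so the first `n₀ + 1` terms go into `C`
    refine ⟨∑ k ∈ Finset.range (n₀ + 1), |u k|, fun n => ?_⟩
    have hsum : 0 ≤ ∑ k ∈ Finset.range (n₀ + 1), |u k| :=
      Finset.sum_nonneg fun k _ => abs_nonneg (u k)
    rcases le_or_gt n n₀ with hn | hn
    · have := Finset.single_le_sum (f := fun k => |u k|) (fun k _ => abs_nonneg (u k))
        (Finset.mem_range_succ_iff.2 hn)
      have : 0 ≤ ε * n := by positivity
      linarith
    · have hn' : (0 : ℝ) < n := by exact_mod_cast (Nat.zero_le n₀).trans_lt hn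
      have := hn₀ n hn.le
      rw [Real.dist_eq, sub_zero, abs_div, Nat.abs_cast, div_lt_iff₀ hn'] at this
      linarith
  · intro h
    rw [Metric.tendsto_nhds]
    intro ε hε
    obtain ⟨C, hC⟩ := h (ε / 2) (half_pos hε)
    filter_upwards [(tendsto_const_div_atTop_nhds_zero_nat C).eventually
      (gt_mem_nhds (half_pos hε)), eventually_gt_atTop 0] with n hCn hn
    have hn' : (0 : ℝ) < n := Nat.cast_pos.2 hn
    rw [div_lt_iff₀ hn'] at hCn
    rw [Real.dist_eq, sub_zero, abs_div, Nat.abs_cast, div_lt_iff₀ hn']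
    linarith [hC n]

theorem Int.card_le_of_forall_natAbs_le {s : Finset ℤ} {K : ℕ} (h : ∀ z ∈ s, z.natAbs ≤ K) :
    s.card ≤ 2 * K + 1 := by
  have hsub : s ⊆ Finset.Icc (-K : ℤ) K := fun z hz => Finset.mem_Icc.2 (by have := h z hz; omega)
  have := Finset.card_le_card hsub
  rw [Int.card_Icc] at this
  omega

theorem tendsto_card_image_range_div_zero {S : ℕ → ℤ}
    (hS : Tendsto (fun n => (S n : ℝ) / n) atTop (𝓝 0)) :
    Tendsto (fun N => ((Finset.range N).image S).card / (N : ℝ)) atTop (𝓝 0) := by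
  rw [tendsto_div_natCast_zero_iff] at hS ⊢
  intro ε hε
  obtain ⟨C, hC⟩ := hS (ε / 2) (half_pos hε)
  have hC0 : 0 ≤ C := by simpa using (abs_nonneg _).trans (hC 0)
  refine ⟨2 * C + 1, fun N => ?_⟩
  have hK : 0 ≤ ε / 2 * N + C := by positivity
  have hcard : ((Finset.range N).image S).card ≤ 2 * ⌊ε / 2 * N + C⌋₊ + 1 := by
    refine Int.card_le_of_forall_natAbs_le ?_
    simp only [Finset.mem_image, Finset.mem_range, forall_exists_index, and_imp]
    rintro _ n hn rfl
    apply Nat.le_floor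
    rw [Nat.cast_natAbs, Int.cast_abs]
    calc |(S n : ℝ)| ≤ ε / 2 * n + C := hC n
      _ ≤ ε / 2 * N + C := by gcongr
  have hcard' : (((Finset.range N).image S).card : ℝ) ≤ 2 * ⌊ε / 2 * N + C⌋₊ + 1 := by
    exact_mod_cast hcard
  rw [Nat.abs_cast]
  linarith [Nat.floor_le hK]

section

variable {α : Type*} {T : α → α} {g : α → ℝ}

theorem bddAbove_range_birkhoffSum_apply_iff (T : α → α) (g : α → ℝ) (x : α) :
    BddAbove (Set.range fun n => birkhoffSum T g n (T x)) ↔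
      BddAbove (Set.range fun n => birkhoffSum T g n x) := by
  constructor
  · rintro ⟨C, hC⟩
    refine ⟨max 0 (g x + C), Set.forall_mem_range.2 fun n => ?_⟩
    cases n with
    | zero => simp
    | succ n =>
      have := hC ⟨n, rfl⟩
      dsimp only at this
      rw [birkhoffSum_succ']
      exact le_max_of_le_right (by linarith)
  · rintro ⟨C, hC⟩
    refine ⟨C - g x, Set.forall_mem_range.2 fun n => ?_⟩
    have := hC ⟨n + 1, rfl⟩
    dsimp only at this
    rw [birkhoffSum_succ'] at this
    linarith

variable [MeasurableSpace α] {μ : Measure α}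

theorem measurable_birkhoffSum (hT : Measurable T) (hg : Measurable g) (n : ℕ) :
    Measurable (birkhoffSum T g n) :=
  Finset.measurable_sum _ fun k _ => hg.comp (hT.iterate k)

theorem MeasureTheory.MeasurePreserving.integrable_birkhoffSum (hT : MeasurePreserving T μ μ)
    (hg : Integrable g μ) (n : ℕ) : Integrable (birkhoffSum T g n) μ :=
  integrable_finsetSum _ fun k _ => (hT.iterate k).integrable_comp_of_integrable hg

theorem measurable_partialSups {f : ℕ → α → ℝ} (hf : ∀ n, Measurable (f n)) (N : ℕ) :
    Measurable (partialSups f N) := by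
  induction N with
  | zero => simpa using hf 0
  | succ N ih => simpa [← Nat.succ_eq_succ] using ih.sup (hf (N + 1))

theorem integrable_partialSups {f : ℕ → α → ℝ} (hf : ∀ n, Integrable (f n) μ) (N : ℕ) :
    Integrable (partialSups f N) μ := by
  induction N with
  | zero => simpa using hf 0
  | succ N ih => simpa [← Nat.succ_eq_succ] using ih.sup (hf (N + 1))

theorem MeasureTheory.MeasurePreserving.integral_comp_of_integrable (hT : MeasurePreserving T μ μ)
    (hg : Integrable g μ) : ∫ x, g (T x) ∂μ = ∫ x, g x ∂μ := by
  have hg' : AEStronglyMeasurable g (Measure.map T μ) := by rw [hT.map_eq]; exact hg.1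
  rw [← integral_map hT.measurable.aemeasurable hg', hT.map_eq]

theorem MeasureTheory.MeasurePreserving.setIntegral_partialSups_birkhoffSum_pos_nonneg
    (hT : MeasurePreserving T μ μ) (hgm : Measurable g) (hg : Integrable g μ) (N : ℕ) :
    0 ≤ ∫ x in {x | 0 < partialSups (birkhoffSum T g) N x}, g x ∂μ := by
  set M := partialSups (birkhoffSum T g) N
  have hM_nonneg (x : α) : 0 ≤ M x := by
    simpa using (le_partialSups_of_le (birkhoffSum T g) (Nat.zero_le N)) x
  have hM_le (x : α) (hx : 0 < M x) : M x ≤ g x + M (T x) := by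
    simp only [M, Pi.partialSups_apply] at hx ⊢
    obtain ⟨j, hjN, hj⟩ := exists_partialSups_eq (birkhoffSum T g · x) N
    rw [hj] at hx ⊢
    cases j with
    | zero => simp at hx
    | succ j =>
      rw [birkhoffSum_succ']
      gcongr
      exact le_partialSups_of_le (birkhoffSum T g · (T x)) (by omega)
  have hMm : Measurable M := measurable_partialSups (measurable_birkhoffSum hT.measurable hgm) N
  have hMi : Integrable M μ := integrable_partialSups (hT.integrable_birkhoffSum hg) N
  have hMTi : Integrable (fun x => M (T x)) μ := hT.integrable_comp_of_integrable hMi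
  have hE : MeasurableSet {x | 0 < M x} := measurableSet_lt measurable_const hMm
  calc 0 = ∫ x, M x ∂μ - ∫ x, M (T x) ∂μ := by rw [hT.integral_comp_of_integrable hMi, sub_self]
    _ ≤ ∫ x in {x | 0 < M x}, M x ∂μ - ∫ x in {x | 0 < M x}, M (T x) ∂μ := by
      rw [setIntegral_eq_integral_of_forall_compl_eq_zero (s := {x | 0 < M x}) (f := M)
        fun x hx => le_antisymm (not_lt.1 hx) (hM_nonneg x)]
      linarith [setIntegral_le_integral (s := {x | 0 < M x}) hMTi
        (Eventually.of_forall fun x => hM_nonneg (T x))]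
    _ = ∫ x in {x | 0 < M x}, (M x - M (T x)) ∂μ :=
      (integral_sub hMi.integrableOn hMTi.integrableOn).symm
    _ ≤ ∫ x in {x | 0 < M x}, g x ∂μ :=
      setIntegral_mono_on (hMi.sub hMTi).integrableOn hg.integrableOn hE
        fun x hx => by linarith [hM_le x hx]

theorem MeasureTheory.MeasurePreserving.setIntegral_exists_birkhoffSum_pos_nonneg
    (hT : MeasurePreserving T μ μ) (hgm : Measurable g) (hg : Integrable g μ) :
    0 ≤ ∫ x in {x | ∃ n, 0 < birkhoffSum T g n x}, g x ∂μ := by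
  have hunion : {x | ∃ n, 0 < birkhoffSum T g n x} =
      ⋃ N, {x | 0 < partialSups (birkhoffSum T g) N x} := by
    ext x
    simp only [Set.mem_ofPred_eq, Set.mem_iUnion, Pi.partialSups_apply]
    constructor
    · rintro ⟨n, hn⟩
      exact ⟨n, hn.trans_le (le_partialSups (birkhoffSum T g · x) n)⟩
    · rintro ⟨N, hN⟩
      obtain ⟨j, -, hj⟩ := exists_partialSups_eq (birkhoffSum T g · x) N
      exact ⟨j, hj ▸ hN⟩
  rw [hunion]
  refine ge_of_tendsto' (tendsto_setIntegral_of_monotone (fun N => ?_) (fun N N' h x hx => ?_)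
    hg.integrableOn) (hT.setIntegral_partialSups_birkhoffSum_pos_nonneg hgm hg)
  · exact measurableSet_lt measurable_const
      (measurable_partialSups (measurable_birkhoffSum hT.measurable hgm) N)
  · exact hx.trans_le (partialSups_monotone (birkhoffSum T g) h x)

theorem Ergodic.ae_bddAbove_range_birkhoffSum (hT : Ergodic T μ) (hgm : Measurable g)
    (hg : Integrable g μ) (hneg : ∫ x, g x ∂μ < 0) :
    ∀ᵐ x ∂μ, BddAbove (Set.range fun n => birkhoffSum T g n x) := by
  have hE : MeasurableSet {x | BddAbove (Set.range fun n => birkhoffSum T g n x)} :=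
    measurableSet_bddAbove_range (measurable_birkhoffSum hT.measurable hgm)
  refine (hT.ae_mem_or_ae_notMem hE (Set.ext fun x => bddAbove_range_birkhoffSum_apply_iff T g x)
    ).resolve_right fun hunbdd => hneg.not_ge ?_
  have hpos : ∀ᵐ x ∂μ, x ∈ {x | ∃ n, 0 < birkhoffSum T g n x} := by
    filter_upwards [hunbdd] with x hx
    by_contra! h
    exact hx ⟨0, Set.forall_mem_range.2 h⟩
  rw [← Measure.restrict_eq_self_of_ae_mem hpos]
  exact hT.toMeasurePreserving.setIntegral_exists_birkhoffSum_pos_nonneg hgm hg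

theorem Ergodic.ae_exists_birkhoffSum_le_mul_add [IsProbabilityMeasure μ] (hT : Ergodic T μ)
    (hgm : Measurable g) (hg : Integrable g μ) (hmean : ∫ x, g x ∂μ = 0) {c : ℝ} (hc : 0 < c) :
    ∀ᵐ x ∂μ, ∃ C, ∀ n, birkhoffSum T g n x ≤ c * n + C := by
  have hneg : ∫ x, g x - c ∂μ < 0 := by
    simp [integral_sub hg (integrable_const c), hmean, hc]
  filter_upwards [hT.ae_bddAbove_range_birkhoffSum (hgm.sub measurable_const)
    (hg.sub (integrable_const c)) hneg] with x ⟨C, hC⟩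
  refine ⟨C, fun n => ?_⟩
  have := hC ⟨n, rfl⟩
  dsimp only at this
  rw [birkhoffSum_sub] at this
  simp only [birkhoffSum, Finset.sum_const, Finset.card_range, nsmul_eq_mul] at this ⊢
  linarith

theorem Ergodic.ae_tendsto_birkhoffAverage_zero [IsProbabilityMeasure μ] (hT : Ergodic T μ)
    (hg : Integrable g μ) (hmean : ∫ x, g x ∂μ = 0) :
    ∀ᵐ x ∂μ, Tendsto (fun n => birkhoffAverage ℝ T g n x) atTop (𝓝 0) := by
  wlog hgm : Measurable g generalizing g
  · have hae : ∀ᵐ x ∂μ, ∀ n, birkhoffAverage ℝ T (hg.1.mk g) n x = birkhoffAverage ℝ T g n x :=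
      ae_all_iff.2 fun n => hT.quasiMeasurePreserving.birkhoffAverage_ae_eq_of_ae_eq ℝ
        hg.1.ae_eq_mk.symm n
    filter_upwards [this (hg.congr hg.1.ae_eq_mk) (by rwa [← integral_congr_ae hg.1.ae_eq_mk])
      hg.1.measurable_mk, hae] with x hx hx_eq
    simpa only [hx_eq] using hx
  have hbound : ∀ᵐ x ∂μ, ∀ k : ℕ, ∃ C, ∀ n, |birkhoffSum T g n x| ≤ 1 / (k + 1) * n + C := by
    refine ae_all_iff.2 fun k => ?_
    have hc : (0 : ℝ) < 1 / (k + 1) := by positivity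
    filter_upwards [hT.ae_exists_birkhoffSum_le_mul_add hgm hg hmean hc,
      hT.ae_exists_birkhoffSum_le_mul_add hgm.neg hg.neg (by simp [integral_neg, hmean]) hc]
      with x ⟨C₁, h₁⟩ ⟨C₂, h₂⟩
    refine ⟨max C₁ C₂, fun n => abs_le.2 ⟨?_, ?_⟩⟩
    · have := h₂ n
      rw [birkhoffSum_neg] at this
      linarith [le_max_right C₁ C₂]
    · linarith [h₁ n, le_max_left C₁ C₂]
  filter_upwards [hbound] with x hx
  simp only [birkhoffAverage, smul_eq_mul, ← div_eq_inv_mul]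
  refine tendsto_div_natCast_zero_iff.2 fun ε hε => ?_
  obtain ⟨k, hk⟩ := exists_nat_one_div_lt hε
  obtain ⟨C, hC⟩ := hx k
  exact ⟨C, fun n => (hC n).trans (by gcongr)⟩

end

theorem stmt_10_general {Y : Type*} [MeasurableSpace Y] (m : Measure Y) [IsProbabilityMeasure m]
    (R : Y → Y) (hErg : Ergodic R m)
    (f : Y → ℤ) (hf : MemLp (fun y => (f y : ℝ)) 2 m)
    (hmean : ∫ y, (f y : ℝ) ∂m = 0)
    (a : ℕ → Y → ℕ)
    (ha : ∀ N y, a N y =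
      ((Finset.range N).image (fun n => ∑ k ∈ Finset.range n, f (R^[k] y))).card) :
    ∀ᵐ y ∂m, Filter.Tendsto (fun N : ℕ => (a N y : ℝ) / N) Filter.atTop (nhds 0) := by
  filter_upwards [hErg.ae_tendsto_birkhoffAverage_zero (hf.integrable one_le_two) hmean]
    with y hy
  simp only [ha]
  refine tendsto_card_image_range_div_zero (hy.congr fun n => ?_)
  simp [birkhoffAverage, birkhoffSum, div_eq_inv_mul]

theorem stmt_10 {Y : Type*} [MeasurableSpace Y] (m : Measure Y) [IsProbabilityMeasure m]
    (R : Y → Y) (hR : MeasurePreserving R m m) (hErg : Ergodic R m)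
    (f : Y → ℤ) (hf : MemLp (fun y => (f y : ℝ)) 2 m)
    (hmean : ∫ y, (f y : ℝ) ∂m = 0)
    (a : ℕ → Y → ℕ)
    (ha : ∀ N y, a N y =
      ((Finset.range N).image (fun n => ∑ k ∈ Finset.range n, f (R^[k] y))).card) :
    ∀ᵐ y ∂m, Filter.Tendsto (fun N : ℕ => (a N y : ℝ) / N) Filter.atTop (nhds 0) :=
  stmt_10_general m R hErg f hf hmean a ha
end
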